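/- arXiv:2002.11237 — 2 statements merged into one kernel-verified Lean document; each statement's English description precedes it below -/
import Mathlib

section
/- Let A, B, C be symmetric n×n real matrices with A and B positive semidefinite. If A ε-spectrally approximates B, then CᵀAC ε-spectrally approximates CᵀBC. Moreover, if ker(C) ⊆ ker(A) = ker(B), then A ε-spectrally approximates B if and only if CᵀAC ε-spectrally approximates CᵀBC. -/
open Matrix

/-- `A` ε-spectrally approximates `B`: `(1-ε)B ⪯ A ⪯ (1+ε)B` in the Loewner order. -/
def SpectralApprox {n : ℕ} (ε : ℝ) (A B : Matrix (Fin n) (Fin n) ℝ) : Prop :=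
  (A - (1 - ε) • B).PosSemidef ∧ ((1 + ε) • B - A).PosSemidef

lemma conjT_eq_T {n : ℕ} (M : Matrix (Fin n) (Fin n) ℝ) : Mᴴ = Mᵀ := by
  ext i j; simp [conjTranspose_apply]

lemma herm_smul {n : ℕ} (c : ℝ) {B : Matrix (Fin n) (Fin n) ℝ} (h : B.IsHermitian) :
    (c • B).IsHermitian := by
  unfold Matrix.IsHermitian at *
  rw [conjTranspose_smul, h]
  simp

/-- Decomposition `v = C x + u` with `C u = 0` for symmetric real `C`. -/
lemma decomp {n : ℕ} (C : Matrix (Fin n) (Fin n) ℝ) (hC : Cᵀ = C) (v : Fin n → ℝ) :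
    ∃ x u, v = C.mulVec x + u ∧ C.mulVec u = 0 := by
  have hdisj : Disjoint (LinearMap.range C.mulVecLin) (LinearMap.ker C.mulVecLin) := by
    rw [Submodule.disjoint_def]
    rintro w ⟨x, rfl⟩ hw
    simp only [LinearMap.mem_ker, mulVecLin_apply] at hw ⊢
    have hx : x ∈ LinearMap.ker (Cᵀ * C).mulVecLin := by
      simp only [LinearMap.mem_ker, mulVecLin_apply, hC, ← mulVec_mulVec] at *
      exact hw
    rw [Matrix.ker_mulVecLin_transpose_mul_self] at hx
    simpa using hx
  have htop : LinearMap.range C.mulVecLin ⊔ LinearMap.ker C.mulVecLin = ⊤ := by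
    apply Submodule.eq_top_of_finrank_eq
    have h1 := Submodule.finrank_sup_add_finrank_inf_eq
      (LinearMap.range C.mulVecLin) (LinearMap.ker C.mulVecLin)
    rw [disjoint_iff.mp hdisj] at h1
    simp only [finrank_bot, add_zero] at h1
    rw [h1, LinearMap.finrank_range_add_finrank_ker]
  have hv : v ∈ LinearMap.range C.mulVecLin ⊔ LinearMap.ker C.mulVecLin := by
    rw [htop]; trivial
    
  obtain ⟨w, ⟨x, rfl⟩, u, hu, rfl⟩ := Submodule.mem_sup.mp hv
  exact ⟨x, u, rfl, hu⟩

/-- If `M` is Hermitian, vanishes on `ker C`, and `CᵀMC` is PSD, then `M` is PSD. -/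
lemma psd_of_conj {n : ℕ} (M C : Matrix (Fin n) (Fin n) ℝ) (hC : Cᵀ = C)
    (hM : M.IsHermitian) (hker : ∀ u, C.mulVec u = 0 → M.mulVec u = 0)
    (h : (Cᵀ * M * C).PosSemidef) : M.PosSemidef := by
  refine .of_dotProduct_mulVec_nonneg hM fun v => ?_
  obtain ⟨x, u, rfl, hu⟩ := decomp C hC v
  have hMu : M.mulVec u = 0 := hker u hu
  have huM : M.vecMul u = 0 := by
    have : Mᵀ = M := by rw [← conjT_eq_T, hM]
    rw [← this, vecMul_transpose, hMu]
  have key := h.dotProduct_mulVec_nonneg x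
  simp only [star_trivial, mulVec_add, dotProduct_add, add_dotProduct,
    hMu, dotProduct_zero, add_zero, ← mulVec_mulVec] at key ⊢
  have h1 : u ⬝ᵥ M.mulVec (C.mulVec x) = 0 := by
    rw [dotProduct_mulVec, huM, zero_dotProduct]
  have h2 : x ⬝ᵥ Cᵀ *ᵥ M *ᵥ C *ᵥ x = C *ᵥ x ⬝ᵥ M *ᵥ C *ᵥ x := by
    rw [dotProduct_mulVec, vecMul_transpose]
  rw [h1, add_zero, ← h2]
  exact key

/-- if `A ≈_ε B` then `CᵀAC ≈_ε CᵀBC`; moreover, if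
`ker C ⊆ ker A = ker B` then `A ≈_ε B ↔ CᵀAC ≈_ε CᵀBC`. -/
theorem stmt_3 {n : ℕ} (ε : ℝ) (hε : 0 < ε)
    (A B C : Matrix (Fin n) (Fin n) ℝ)
    (hA : A.PosSemidef) (hB : B.PosSemidef) (hC : Cᵀ = C) :
    (SpectralApprox ε A B → SpectralApprox ε (Cᵀ * A * C) (Cᵀ * B * C)) ∧
    ((∀ v : Fin n → ℝ, C.mulVec v = 0 → A.mulVec v = 0) →
      (∀ v : Fin n → ℝ, A.mulVec v = 0 ↔ B.mulVec v = 0) →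
      (SpectralApprox ε A B ↔ SpectralApprox ε (Cᵀ * A * C) (Cᵀ * B * C))) := by
  have e1 : Cᵀ * A * C - (1 - ε) • (Cᵀ * B * C) = Cᵀ * (A - (1 - ε) • B) * C := by
    rw [Matrix.mul_sub, Matrix.sub_mul]
    congr 1
    simp [Matrix.mul_smul, Matrix.smul_mul]
  have e2 : (1 + ε) • (Cᵀ * B * C) - Cᵀ * A * C = Cᵀ * ((1 + ε) • B - A) * C := by
    rw [Matrix.mul_sub, Matrix.sub_mul]
    congr 1
    simp [Matrix.mul_smul, Matrix.smul_mul]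
  have fwd : SpectralApprox ε A B → SpectralApprox ε (Cᵀ * A * C) (Cᵀ * B * C) := by
    rintro ⟨h1, h2⟩
    constructor
    · rw [e1, ← conjT_eq_T]
      exact h1.conjTranspose_mul_mul_same C
    · rw [e2, ← conjT_eq_T]
      exact h2.conjTranspose_mul_mul_same C
  refine ⟨fwd, fun hkerCA hAB => ⟨fwd, ?_⟩⟩
  rintro ⟨h1, h2⟩
  rw [e1] at h1
  rw [e2] at h2
  constructor
  · refine psd_of_conj _ C hC ?_ ?_ h1
    · exact hA.1.sub (herm_smul _ hB.1)
    · intro u hu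
      have hAu := hkerCA u hu
      have hBu := (hAB u).mp hAu
      simp [sub_mulVec, smul_mulVec, hAu, hBu]
  · refine psd_of_conj _ C hC ?_ ?_ h2
    · exact (herm_smul _ hB.1).sub hA.1
    · intro u hu
      have hAu := hkerCA u hu
      have hBu := (hAB u).mp hAu
      simp [sub_mulVec, smul_mulVec, hAu, hBu]
end

section
/- Let C be a real symmetric n×n matrix and let A, B be real symmetric PSD matrices with A ⪯ B and ker(A) = ker(B) = ker(C). Then the spectral radius satisfies ρ(CA) ≤ ρ(CB). -/
open Matrix
open scoped Matrix.Norms.L2Operator ComplexOrder MatrixOrder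

namespace Stmt14Aux
variable {n : ℕ}

noncomputable instance mCStar : CStarAlgebra (Matrix (Fin n) (Fin n) ℂ) :=
  { (inferInstance : NormedRing _), (inferInstance : StarRing _),
    (inferInstance : CompleteSpace _), (inferInstance : CStarRing _),
    (inferInstance : NormedAlgebra ℂ _), (inferInstance : StarModule ℂ _) with }

noncomputable def _root_.Matrix.PosSemidef.sqrt {R : Matrix (Fin n) (Fin n) ℂ}
    (_hR : R.PosSemidef) : Matrix (Fin n) (Fin n) ℂ := CFC.sqrt R

lemma _root_.Matrix.PosSemidef.posSemidef_sqrt {R : Matrix (Fin n) (Fin n) ℂ}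
    (hR : R.PosSemidef) : hR.sqrt.PosSemidef := (CFC.sqrt_nonneg R).posSemidef

lemma _root_.Matrix.PosSemidef.sqrt_mul_self {R : Matrix (Fin n) (Fin n) ℂ}
    (hR : R.PosSemidef) : hR.sqrt * hR.sqrt = R := CFC.sqrt_mul_sqrt_self R hR.nonneg

lemma iSup_nnnorm_diff_zero (s : Set ℂ) :
    (⨆ k ∈ s, (‖k‖₊ : ENNReal)) = ⨆ k ∈ s \ {0}, (‖k‖₊ : ENNReal) := by
  apply le_antisymm
  · refine iSup₂_le fun k hk => ?_
    rcases eq_or_ne k 0 with rfl | h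
    · simp
    · exact le_iSup₂ (f := fun k _ => (‖k‖₊ : ENNReal)) k ⟨hk, h⟩
  · exact iSup₂_le fun k hk => le_iSup₂ (f := fun k _ => (‖k‖₊ : ENNReal)) k hk.1

lemma specRad_mul_comm {A : Type*} [Ring A] [Algebra ℂ A] (a b : A) :
    spectralRadius ℂ (a * b) = spectralRadius ℂ (b * a) := by
  unfold spectralRadius
  rw [iSup_nnnorm_diff_zero (spectrum ℂ (a*b)), iSup_nnnorm_diff_zero (spectrum ℂ (b*a)),
    spectrum.nonzero_mul_comm]

lemma map_mul_ofReal (P Q : Matrix (Fin n) (Fin n) ℝ) :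
    (P * Q).map Complex.ofReal = P.map Complex.ofReal * Q.map Complex.ofReal :=
  Matrix.map_mul (f := Complex.ofRealHom)

lemma ct_map_ofReal (P : Matrix (Fin n) (Fin n) ℝ) :
    (P.map Complex.ofReal)ᴴ = Pᵀ.map Complex.ofReal := by
  rw [← Matrix.conjTranspose_map (f := Complex.ofReal) (fun x => by simp [Complex.conj_ofReal])]
  ext i j; simp [Matrix.conjTranspose_apply]

lemma psd_map {M : Matrix (Fin n) (Fin n) ℝ} (hM : M.PosSemidef) :
    (M.map Complex.ofReal).PosSemidef := by
  obtain ⟨B, hB⟩ : ∃ B : Matrix (Fin n) (Fin n) ℝ, M = Bᵀ * B := ⟨CFC.sqrt M, by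
    rw [show (CFC.sqrt M)ᵀ = CFC.sqrt M from
      (Matrix.conjTranspose_eq_transpose_of_trivial _).symm.trans (CFC.sqrt_nonneg M).posSemidef.1,
      CFC.sqrt_mul_sqrt_self M hM.nonneg]⟩
  have h1 : M.map Complex.ofReal = (B.map Complex.ofReal)ᴴ * (B.map Complex.ofReal) := by
    rw [hB, map_mul_ofReal, ct_map_ofReal]
  rw [h1]
  exact Matrix.posSemidef_conjTranspose_mul_self _

lemma herm_map {M : Matrix (Fin n) (Fin n) ℝ} (hM : Mᵀ = M) :
    (M.map Complex.ofReal).IsHermitian := by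
  show _ = _
  rw [ct_map_ofReal, hM]

lemma opNorm_le_of_mulVec {X Y : Matrix (Fin n) (Fin n) ℂ}
    (h : ∀ v : Fin n → ℂ,
      ‖((WithLp.equiv 2 _).symm (X *ᵥ v) : EuclideanSpace ℂ (Fin n))‖ ≤
      ‖((WithLp.equiv 2 _).symm (Y *ᵥ v) : EuclideanSpace ℂ (Fin n))‖) :
    ‖X‖ ≤ ‖Y‖ := by
  rw [Matrix.l2_opNorm_def]
  refine ContinuousLinearMap.opNorm_le_bound _ (norm_nonneg Y) fun v => ?_
  calc ‖(Matrix.toEuclideanLin.trans LinearMap.toContinuousLinearMap X) v‖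
      = ‖((WithLp.equiv 2 _).symm (X *ᵥ (WithLp.equiv 2 _) v) : EuclideanSpace ℂ (Fin n))‖ := rfl
    _ ≤ ‖((WithLp.equiv 2 _).symm (Y *ᵥ (WithLp.equiv 2 _) v) : EuclideanSpace ℂ (Fin n))‖ := h _
    _ ≤ ‖Y‖ * ‖v‖ := Y.l2_opNorm_mulVec v

lemma sqrt_mulVec_norm_sq {R : Matrix (Fin n) (Fin n) ℂ} (hR : R.PosSemidef) (w : Fin n → ℂ) :
    ‖((WithLp.equiv 2 _).symm (hR.sqrt *ᵥ w) : EuclideanSpace ℂ (Fin n))‖ ^ 2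
      = RCLike.re (dotProduct (star w) (R *ᵥ w)) := by
  rw [← inner_self_eq_norm_sq (𝕜 := ℂ), WithLp.equiv_symm_apply, EuclideanSpace.inner_toLp_toLp, dotProduct_comm]
  congr 1
  have hS : hR.sqrtᴴ = hR.sqrt := hR.posSemidef_sqrt.1
  calc dotProduct (star (hR.sqrt *ᵥ w)) (hR.sqrt *ᵥ w)
      = dotProduct (star w ᵥ* hR.sqrtᴴ) (hR.sqrt *ᵥ w) := by rw [Matrix.star_mulVec]
    _ = dotProduct (star w) (hR.sqrtᴴ *ᵥ (hR.sqrt *ᵥ w)) := by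
        simp [Matrix.dotProduct_mulVec, Matrix.vecMul_vecMul, Matrix.mulVec_mulVec]
    _ = dotProduct (star w) (R *ᵥ w) := by
        rw [hS, Matrix.mulVec_mulVec, hR.sqrt_mul_self]

lemma sqrt_mulVec_norm_le {P Q : Matrix (Fin n) (Fin n) ℂ} (hP : P.PosSemidef)
    (hQ : Q.PosSemidef) (hPQ : (Q - P).PosSemidef) (w : Fin n → ℂ) :
    ‖((WithLp.equiv 2 _).symm (hP.sqrt *ᵥ w) : EuclideanSpace ℂ (Fin n))‖ ≤
    ‖((WithLp.equiv 2 _).symm (hQ.sqrt *ᵥ w) : EuclideanSpace ℂ (Fin n))‖ := by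
  have h0 := hPQ.re_dotProduct_nonneg w
  have hsub : RCLike.re (dotProduct (star w) ((Q - P) *ᵥ w))
      = RCLike.re (dotProduct (star w) (Q *ᵥ w)) - RCLike.re (dotProduct (star w) (P *ᵥ w)) := by
    rw [Matrix.sub_mulVec, dotProduct_sub, map_sub]
  have key : ‖((WithLp.equiv 2 _).symm (hP.sqrt *ᵥ w) : EuclideanSpace ℂ (Fin n))‖ ^ 2
      ≤ ‖((WithLp.equiv 2 _).symm (hQ.sqrt *ᵥ w) : EuclideanSpace ℂ (Fin n))‖ ^ 2 := by
    rw [sqrt_mulVec_norm_sq hP w, sqrt_mulVec_norm_sq hQ w]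
    linarith [hsub ▸ h0]
  exact (pow_le_pow_iff_left₀ (norm_nonneg _) (norm_nonneg _) two_ne_zero).mp key

lemma sqrt_mul_opNorm_le {P Q : Matrix (Fin n) (Fin n) ℂ} (hP : P.PosSemidef)
    (hQ : Q.PosSemidef) (hPQ : (Q - P).PosSemidef) (N : Matrix (Fin n) (Fin n) ℂ) :
    ‖hP.sqrt * N‖ ≤ ‖hQ.sqrt * N‖ := by
  refine opNorm_le_of_mulVec fun v => ?_
  rw [← Matrix.mulVec_mulVec, ← Matrix.mulVec_mulVec]
  exact sqrt_mulVec_norm_le hP hQ hPQ (N *ᵥ v)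

end Stmt14Aux

open Stmt14Aux

/-- for symmetric `C` and PSD `A ⪯ B` with
`ker A = ker B = ker C`, the spectral radius satisfies `ρ(CA) ≤ ρ(CB)`. -/
theorem stmt_14 {n : ℕ} (C A B : Matrix (Fin n) (Fin n) ℝ)
    (hC : Cᵀ = C) (hA : A.PosSemidef) (hB : B.PosSemidef)
    (hAB : (B - A).PosSemidef)
    (hkerAB : ∀ v : Fin n → ℝ, A.mulVec v = 0 ↔ B.mulVec v = 0)
    (hkerAC : ∀ v : Fin n → ℝ, A.mulVec v = 0 ↔ C.mulVec v = 0) :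
    spectralRadius ℂ ((C * A).map Complex.ofReal)
      ≤ spectralRadius ℂ ((C * B).map Complex.ofReal) := by
  set C' := C.map Complex.ofReal with hC'
  set A' := A.map Complex.ofReal with hA'
  set B' := B.map Complex.ofReal with hB'
  have hA'p : A'.PosSemidef := psd_map hA
  have hB'p : B'.PosSemidef := psd_map hB
  have hC'h : C'ᴴ = C' := herm_map hC
  have hBA' : (B' - A').PosSemidef := by
    have : (B - A).map Complex.ofReal = B' - A' := by
      ext i j; simp [hA', hB', Matrix.map_apply]
    exact this ▸ psd_map hAB
  set SA := hA'p.sqrt with hSA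
  set SB := hB'p.sqrt with hSB
  have hSAh : SAᴴ = SA := hA'p.posSemidef_sqrt.1
  have hSBh : SBᴴ = SB := hB'p.posSemidef_sqrt.1
  -- rewrite the spectral radii
  have hmapA : (C * A).map Complex.ofReal = C' * A' := map_mul_ofReal C A
  have hmapB : (C * B).map Complex.ofReal = C' * B' := map_mul_ofReal C B
  have hradA : spectralRadius ℂ ((C * A).map Complex.ofReal)
      = spectralRadius ℂ (SA * (C' * SA)) := by
    rw [hmapA, ← hA'p.sqrt_mul_self, ← hSA, ← mul_assoc, specRad_mul_comm]
  have hradB : spectralRadius ℂ ((C * B).map Complex.ofReal)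
      = spectralRadius ℂ (SB * (C' * SB)) := by
    rw [hmapB, ← hB'p.sqrt_mul_self, ← hSB, ← mul_assoc, specRad_mul_comm]
  have hselfA : IsSelfAdjoint (SA * (C' * SA)) := by
    show star _ = _
    show (SA * (C' * SA))ᴴ = _
    rw [Matrix.conjTranspose_mul, Matrix.conjTranspose_mul, hSAh, hC'h, mul_assoc]
  have hselfB : IsSelfAdjoint (SB * (C' * SB)) := by
    show star _ = _
    show (SB * (C' * SB))ᴴ = _
    rw [Matrix.conjTranspose_mul, Matrix.conjTranspose_mul, hSBh, hC'h, mul_assoc]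
  rw [hradA, hradB, hselfA.spectralRadius_eq_nnnorm, hselfB.spectralRadius_eq_nnnorm]
  rw [ENNReal.coe_le_coe]
  rw [← NNReal.coe_le_coe]
  show ‖SA * (C' * SA)‖ ≤ ‖SB * (C' * SB)‖
  calc ‖SA * (C' * SA)‖ ≤ ‖SB * (C' * SA)‖ := sqrt_mul_opNorm_le hA'p hB'p hBA' _
    _ = ‖(SB * (C' * SA))ᴴ‖ := (Matrix.l2_opNorm_conjTranspose _).symm
    _ = ‖SA * (C' * SB)‖ := by
        rw [Matrix.conjTranspose_mul, Matrix.conjTranspose_mul, hSAh, hSBh, hC'h, mul_assoc]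
    _ ≤ ‖SB * (C' * SB)‖ := sqrt_mul_opNorm_le hA'p hB'p hBA' _
end
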